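/- arXiv:1302.0759 — 7 statements merged into one kernel-verified Lean document; each statement's English description precedes it below -/
import Mathlib

section
/- Let α : ℝ → ℝ be C² with all zeroes simple, let β = α - α', let A be an antiderivative of x ↦ α(x)β(x), and define f(x,y) = (α(x) - β(x)²·y)² - A(x). If (x,y) satisfies ∂f/∂x (x,y) = 0 and ∂f/∂y (x,y) = 0, then α(x) = 0 and y = 0. -/
theorem critical_points_of_f
    (α : ℝ → ℝ) (hα : ContDiff ℝ 2 α)
    (hsimple : ∀ x, α x = 0 → deriv α x ≠ 0)
    (β : ℝ → ℝ) (hβ : ∀ x, β x = α x - deriv α x)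
    (A : ℝ → ℝ) (hA : ∀ x, HasDerivAt A (α x * β x) x)
    (f : ℝ → ℝ → ℝ)
    (hf : ∀ x y, f x y = (α x - (β x) ^ 2 * y) ^ 2 - A x) :
    ∀ x y, deriv (fun t => f t y) x = 0 → deriv (fun t => f x t) y = 0 →
      α x = 0 ∧ y = 0 := by
  have hdα : Differentiable ℝ α := hα.differentiable (by norm_num)
  have h2 : ContDiff ℝ ((1:ℕ∞)+1) α := by
    exact hα.of_le (by norm_num)
  have hdα' : Differentiable ℝ (deriv α) :=
    ((contDiff_succ_iff_deriv.mp h2).2.2.differentiable (by norm_num))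
  intro x y hx hy
  have hαd : HasDerivAt α (deriv α x) x := (hdα x).hasDerivAt
  have hα'd : HasDerivAt (deriv α) (deriv (deriv α) x) x := (hdα' x).hasDerivAt
  have hβd : HasDerivAt β (deriv α x - deriv (deriv α) x) x := by
    have : β = fun t => α t - deriv α t := funext hβ
    rw [this]
    exact hαd.sub hα'd
  set a := α x with ha
  set b := β x with hb
  set a' := deriv α x with ha'
  set b' := deriv α x - deriv (deriv α) x with hb'
  -- derivative in x
  have hgx : HasDerivAt (fun t => f t y)
      (2 * (a - b ^ 2 * y) ^ 1 * (a' - (2 * b ^ 1 * b') * y) - a * b) x := by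
    have : (fun t => f t y) = fun t => (α t - (β t) ^ 2 * y) ^ 2 - A t := by
      funext t; exact hf t y
    rw [this]
    exact ((hαd.sub (((hβd.pow 2).mul_const y))).pow 2).sub (hA x)
  have hgy : HasDerivAt (fun t => f x t)
      (2 * (a - b ^ 2 * y) ^ 1 * (0 - b ^ 2 * 1)) y := by
    have : (fun t => f x t) = fun t => (a - b ^ 2 * t) ^ 2 - A x := by
      funext t; exact hf x t
    rw [this]
    exact (((hasDerivAt_const y a).sub
      ((hasDerivAt_id y).const_mul (b ^ 2))).pow 2).sub_const (A x)
  have Hx : 2 * (a - b ^ 2 * y) ^ 1 * (a' - (2 * b ^ 1 * b') * y) - a * b = 0 := by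
    rw [← hgx.deriv]; exact hx
  have Hy : 2 * (a - b ^ 2 * y) ^ 1 * (0 - b ^ 2 * 1) = 0 := by
    rw [← hgy.deriv]; exact hy
  simp only [pow_one] at Hx Hy
  have hbne : b ≠ 0 := by
    intro h0
    have hab : a = a' := by
      have := hβ x; rw [← hb, ← ha, ← ha'] at this; linarith [this]
    have ha0 : a = 0 := by
      rw [h0, ← hab] at Hx; nlinarith [Hx]
    exact hsimple x ha0 (by rw [← ha']; rw [← hab]; exact ha0)
  have key : a - b ^ 2 * y = 0 := by
    have hb2 : b ^ 2 ≠ 0 := pow_ne_zero 2 hbne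
    have : (a - b ^ 2 * y) * b ^ 2 = 0 := by nlinarith [Hy]
    exact (mul_eq_zero.mp this).resolve_right hb2
  have ha0 : a = 0 := by
    have : a * b = 0 := by rw [key] at Hx; linarith [Hx]
    exact (mul_eq_zero.mp this).resolve_right hbne
  refine ⟨ha0, ?_⟩
  have : b ^ 2 * y = 0 := by linarith [key, ha0]
  have := (mul_eq_zero.mp this).resolve_left (pow_ne_zero 2 hbne)
  exact this
end

section
/- Let α, β, A, f be as above. If α(x₀) = 0 (so α'(x₀) ≠ 0), then (x₀, 0) is a critical point of f, i.e., ∂f/∂x (x₀,0) = 0 and ∂f/∂y (x₀,0) = 0. -/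
theorem zeros_are_critical_points
    (α : ℝ → ℝ) (hα : ContDiff ℝ 2 α)
    (hsimple : ∀ x, α x = 0 → deriv α x ≠ 0)
    (β : ℝ → ℝ) (hβ : ∀ x, β x = α x - deriv α x)
    (A : ℝ → ℝ) (hA : ∀ x, HasDerivAt A (α x * β x) x)
    (f : ℝ → ℝ → ℝ)
    (hf : ∀ x y, f x y = (α x - (β x) ^ 2 * y) ^ 2 - A x)
    (x₀ : ℝ) (hx₀ : α x₀ = 0) :
    deriv (fun t => f t 0) x₀ = 0 ∧ deriv (fun t => f x₀ t) 0 = 0 := by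
  have hαd : HasDerivAt α (deriv α x₀) x₀ :=
    ((hα.differentiable (by norm_num)) x₀).hasDerivAt
  constructor
  · have h1 : HasDerivAt (fun t => f t 0)
        (2 * α x₀ * deriv α x₀ - α x₀ * β x₀) x₀ := by
      have : HasDerivAt (fun t => α t ^ 2 - A t)
          (2 * α x₀ * deriv α x₀ - α x₀ * β x₀) x₀ := by
        have := (hαd.fun_pow 2).fun_sub (hA x₀)
        simpa [mul_comm, mul_assoc, mul_left_comm] using this
      refine this.congr_of_eventuallyEq (Filter.Eventually.of_forall fun t => ?_)
      simp [hf]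
    rw [h1.deriv, hx₀]; ring
  · have h2 : HasDerivAt (fun t => f x₀ t)
        (2 * (α x₀ - β x₀ ^ 2 * 0) * (-(β x₀ ^ 2))) 0 := by
      have hc : HasDerivAt (fun t : ℝ => α x₀ - β x₀ ^ 2 * t) (-(β x₀ ^ 2)) 0 := by
        simpa using ((hasDerivAt_id (0:ℝ)).const_mul (β x₀ ^ 2)).const_sub (α x₀)
      have := (hc.fun_pow 2).sub_const (A x₀)
      refine HasDerivAt.congr_of_eventuallyEq ?_ (Filter.Eventually.of_forall fun t => (hf x₀ t))
      convert this using 1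
      ring
    rw [h2.deriv, hx₀]; ring
end

section
/- Let α, β, A, f be as above. At any point (x₀, 0) with α(x₀) = 0, the second partial derivatives of f satisfy f_xx = 3·α'(x₀)², f_yy = 2·α'(x₀)⁴, and f_xy = -2·α'(x₀)³. -/
theorem second_partials_at_critical_points
    (α : ℝ → ℝ) (hα : ContDiff ℝ 2 α)
    (hsimple : ∀ x, α x = 0 → deriv α x ≠ 0)
    (β : ℝ → ℝ) (hβ : ∀ x, β x = α x - deriv α x)
    (A : ℝ → ℝ) (hA : ∀ x, HasDerivAt A (α x * β x) x)
    (f : ℝ → ℝ → ℝ)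
    (hf : ∀ x y, f x y = (α x - (β x) ^ 2 * y) ^ 2 - A x)
    (x₀ : ℝ) (hx₀ : α x₀ = 0) :
    deriv (fun x => deriv (fun x' => f x' 0) x) x₀ = 3 * (deriv α x₀) ^ 2 ∧
    deriv (fun y => deriv (fun y' => f x₀ y') y) 0 = 2 * (deriv α x₀) ^ 4 ∧
    deriv (fun y => deriv (fun x => f x y) x₀) 0 = -2 * (deriv α x₀) ^ 3 := by
  have hα1 : Differentiable ℝ α := hα.differentiable (by norm_num)
  have hα' : Differentiable ℝ (deriv α) :=
    ((contDiff_succ_iff_deriv.mp (show ContDiff ℝ (1+1) α by norm_num [hα])).2.2).differentiable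
      one_ne_zero
  set a := deriv α x₀ with ha
  set a2 := deriv (deriv α) x₀ with ha2
  have Hα : HasDerivAt α a x₀ := (hα1 x₀).hasDerivAt
  have Hα' : HasDerivAt (deriv α) a2 x₀ := (hα' x₀).hasDerivAt
  have hβx₀ : β x₀ = -a := by rw [hβ, hx₀]; ring
  refine ⟨?_, ?_, ?_⟩
  · -- f_xx
    have h1 : (fun x => deriv (fun x' => f x' 0) x)
        = fun x => 2 * α x * deriv α x - α x * (α x - deriv α x) := by
      funext x
      have hfun : (fun x' => f x' 0) = fun x' => α x' ^ 2 - A x' := by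
        funext x'; rw [hf]; ring
      rw [hfun]
      have h := (((hα1 x).hasDerivAt).pow 2).sub (hA x)
      rw [show (fun x' => α x' ^ 2 - A x') = α ^ 2 - A from rfl, h.deriv, hβ]; simp only [Nat.cast_ofNat, Nat.reduceSub, pow_one]
    rw [h1]
    have h2 : HasDerivAt (fun x => 2 * α x * deriv α x - α x * (α x - deriv α x))
        (2 * a * deriv α x₀ + 2 * α x₀ * a2 - (a * (α x₀ - deriv α x₀) + α x₀ * (a - a2))) x₀ := by
      have := (((Hα.const_mul 2).mul Hα').sub (Hα.mul (Hα.sub Hα')))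
      exact this
    rw [h2.deriv, hx₀]; try ring
  · -- f_yy
    set b := β x₀ ^ 2 with hb
    have h1 : (fun y => deriv (fun y' => f x₀ y') y) = fun y => 2 * b ^ 2 * y := by
      funext y
      have hfun : (fun y' => f x₀ y') = fun y' => (α x₀ - b * y') ^ 2 - A x₀ := by
        funext y'; rw [hf]
      rw [hfun]
      have hlin : HasDerivAt (fun y' : ℝ => α x₀ - b * y') (-b) y := by
        exact ((hasDerivAt_const y (α x₀)).sub ((hasDerivAt_id y).const_mul b)).congr_deriv (by simp)
      have h := ((hlin.pow 2).sub_const (A x₀))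
      rw [show (fun y' => (α x₀ - b * y') ^ 2 - A x₀) = (fun x => ((fun y' => α x₀ - b * y') ^ 2) x - A x₀) from rfl, h.deriv, hx₀]; simp only [Nat.cast_ofNat, Nat.reduceSub, pow_one]; ring
    rw [h1]
    have h2 : HasDerivAt (fun y : ℝ => 2 * b ^ 2 * y) (2 * b ^ 2) 0 := by
      simpa using (hasDerivAt_id (0:ℝ)).const_mul (2 * b ^ 2)
    rw [h2.deriv, hb, hβx₀]; ring
  · -- f_xy
    have Hβ : HasDerivAt β (a - a2) x₀ := by
      have hβfun : β = fun x => α x - deriv α x := funext hβ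
      rw [hβfun]; exact Hα.sub Hα'
    set d := 2 * β x₀ * (a - a2) with hd
    have h1 : (fun y => deriv (fun x => f x y) x₀)
        = fun y => 2 * ((α x₀ - β x₀ ^ 2 * y) * (a - d * y)) - α x₀ * β x₀ := by
      funext y
      have hfun : (fun x => f x y) = fun x => (α x - β x ^ 2 * y) ^ 2 - A x := by
        funext x; rw [hf]
      rw [hfun]
      have hin : HasDerivAt (fun x => α x - β x ^ 2 * y)
          (a - (2 * β x₀ ^ 1 * (a - a2)) * y) x₀ := Hα.sub ((Hβ.pow 2).mul_const y)
      have h := ((hin.pow 2).sub (hA x₀))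
      rw [show (fun x => (α x - β x ^ 2 * y) ^ 2 - A x) = (fun x => α x - β x ^ 2 * y) ^ 2 - A from rfl, h.deriv, hd]; simp only [Nat.cast_ofNat, Nat.reduceSub, pow_one]; ring
    rw [h1]
    have h2 : HasDerivAt
        (fun y : ℝ => 2 * ((α x₀ - β x₀ ^ 2 * y) * (a - d * y)) - α x₀ * β x₀)
        (2 * (-β x₀ ^ 2 * (a - d * 0) + (α x₀ - β x₀ ^ 2 * 0) * -d)) 0 := by
      have hlin1 : HasDerivAt (fun y : ℝ => α x₀ - β x₀ ^ 2 * y) (-(β x₀ ^ 2)) 0 := by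
        exact ((hasDerivAt_const (0:ℝ) (α x₀)).sub ((hasDerivAt_id (0:ℝ)).const_mul (β x₀ ^ 2))).congr_deriv (by simp)
      have hlin2 : HasDerivAt (fun y : ℝ => a - d * y) (-d) 0 := by
        exact ((hasDerivAt_const (0:ℝ) a).sub ((hasDerivAt_id (0:ℝ)).const_mul d)).congr_deriv (by simp)
      exact ((hlin1.mul hlin2).const_mul 2).sub_const (α x₀ * β x₀)
    rw [h2.deriv, hx₀, hβx₀]; ring
end

section
/- Let α, β, A, f be as above. At any point (x₀, 0) with α(x₀) = 0, the Hessian determinant f_xx·f_yy - f_xy² equals 2·α'(x₀)⁶, which is strictly positive; hence the Hessian of f at (x₀,0) is positive definite. -/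
theorem hessian_pos_def_at_critical_points
    (α : ℝ → ℝ) (hα : ContDiff ℝ 2 α)
    (hsimple : ∀ x, α x = 0 → deriv α x ≠ 0)
    (β : ℝ → ℝ) (hβ : ∀ x, β x = α x - deriv α x)
    (A : ℝ → ℝ) (hA : ∀ x, HasDerivAt A (α x * β x) x)
    (f : ℝ → ℝ → ℝ)
    (hf : ∀ x y, f x y = (α x - (β x) ^ 2 * y) ^ 2 - A x)
    (x₀ : ℝ) (hx₀ : α x₀ = 0)
    (fxx fyy fxy : ℝ)
    (hfxx : fxx = deriv (fun x => deriv (fun x' => f x' 0) x) x₀)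
    (hfyy : fyy = deriv (fun y => deriv (fun y' => f x₀ y') y) 0)
    (hfxy : fxy = deriv (fun y => deriv (fun x => f x y) x₀) 0) :
    fxx * fyy - fxy ^ 2 = 2 * (deriv α x₀) ^ 6 ∧
    0 < fxx * fyy - fxy ^ 2 ∧
    (Matrix.of ![![fxx, fxy], ![fxy, fyy]]).PosDef := by
  -- Basic differentiability facts
  have hα2 : ContDiff ℝ ((1 : ℕ) + 1) α := by exact_mod_cast hα
  have hαd : Differentiable ℝ α := hα2.differentiable (by norm_num)
  have hdα : ContDiff ℝ 1 (deriv α) := (contDiff_succ_iff_deriv.mp hα2).2.2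
  have hdαd : Differentiable ℝ (deriv α) := hdα.differentiable (by norm_num)
  set a : ℝ := deriv α x₀ with ha_def
  have ha : a ≠ 0 := hsimple x₀ hx₀
  set b : ℝ := β x₀ with hb_def
  have hb : b = -a := by rw [hb_def, hβ, hx₀]; ring
  set da : ℝ := deriv (deriv α) x₀ with hda_def
  -- derivative of β at x₀
  have hβ_has : HasDerivAt β (a - da) x₀ := by
    have h : β = fun x => α x - deriv α x := funext hβ
    rw [h]
    exact ((hαd x₀).hasDerivAt).sub ((hdαd x₀).hasDerivAt)
  -- Compute fxx
  have key1 : ∀ x, deriv (fun x' => f x' 0) x = 2 * α x * deriv α x - α x * β x := by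
    intro x
    have h1 : (fun x' => f x' 0) = fun x' => α x' ^ 2 - A x' := by
      funext x'; rw [hf]; ring
    rw [h1]
    have h2 : HasDerivAt (fun x' => α x' ^ 2 - A x')
        (2 * α x * deriv α x - α x * β x) x := by
      have := (((hαd x).hasDerivAt).pow 2).sub (hA x)
      refine this.congr_deriv ?_; ring
    exact h2.deriv
  have hfxx' : fxx = 3 * a ^ 2 := by
    rw [hfxx]
    have h1 : (fun x => deriv (fun x' => f x' 0) x)
        = fun x => 2 * α x * deriv α x - α x * β x := funext key1
    rw [h1]
    have h2 : HasDerivAt (fun x => 2 * α x * deriv α x - α x * β x) (3 * a ^ 2) x₀ := by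
      have h3 := (((hαd x₀).hasDerivAt.const_mul (2 : ℝ)).mul ((hdαd x₀).hasDerivAt)).sub
        (((hαd x₀).hasDerivAt).mul hβ_has)
      refine h3.congr_deriv ?_
      rw [hx₀, hb_def.symm, hb]; ring
    exact h2.deriv
  -- Compute fyy
  have hfyy' : fyy = 2 * a ^ 4 := by
    rw [hfyy]
    have h1 : ∀ y, deriv (fun y' => f x₀ y') y = 2 * b ^ 4 * y := by
      intro y
      have h2 : (fun y' => f x₀ y') = fun y' => b ^ 4 * y' ^ 2 - A x₀ := by
        funext y'; rw [hf, hx₀, hb_def]; ring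
      rw [h2]
      have h3 : HasDerivAt (fun y' => b ^ 4 * y' ^ 2 - A x₀) (2 * b ^ 4 * y) y := by
        have := (((hasDerivAt_pow 2 y).const_mul (b ^ 4))).sub_const (A x₀)
        refine this.congr_deriv ?_; ring
      exact h3.deriv
    rw [funext h1]
    have h4 : HasDerivAt (fun y : ℝ => 2 * b ^ 4 * y) (2 * b ^ 4) (0 : ℝ) := by
      simpa using (hasDerivAt_id (0 : ℝ)).const_mul (2 * b ^ 4)
    rw [h4.deriv, hb]; ring
  -- Compute fxy
  have hfxy' : fxy = -2 * a ^ 3 := by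
    rw [hfxy]
    have h1 : ∀ y : ℝ, deriv (fun x => f x y) x₀
        = (-2 * b ^ 2 * a) * y + (4 * b ^ 3 * (a - da)) * y ^ 2 := by
      intro y
      have h2 : (fun x => f x y) = fun x => (α x - β x ^ 2 * y) ^ 2 - A x := by
        funext x; rw [hf]
      rw [h2]
      have hg : HasDerivAt (fun x => α x - β x ^ 2 * y)
          (a - 2 * b * (a - da) * y) x₀ := by
        have := ((hαd x₀).hasDerivAt).sub (((hβ_has.pow 2)).mul_const y)
        refine this.congr_deriv ?_
        rw [← hb_def]; ring
      have h3 : HasDerivAt (fun x => (α x - β x ^ 2 * y) ^ 2 - A x)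
          ((-2 * b ^ 2 * a) * y + (4 * b ^ 3 * (a - da)) * y ^ 2) x₀ := by
        have := (hg.pow 2).sub (hA x₀)
        refine this.congr_deriv ?_
        rw [hx₀, ← hb_def]; ring
      exact h3.deriv
    rw [funext h1]
    have h4 : HasDerivAt
        (fun y : ℝ => (-2 * b ^ 2 * a) * y + (4 * b ^ 3 * (a - da)) * y ^ 2)
        (-2 * b ^ 2 * a) (0 : ℝ) := by
      have h5 := ((hasDerivAt_id (0 : ℝ)).const_mul (-2 * b ^ 2 * a)).add
        (((hasDerivAt_pow 2 (0 : ℝ)).const_mul (4 * b ^ 3 * (a - da))))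
      exact h5.congr_deriv (by simp)
    rw [h4.deriv, hb]; ring
  -- Put it together
  have hdet : fxx * fyy - fxy ^ 2 = 2 * a ^ 6 := by
    rw [hfxx', hfyy', hfxy']; ring
  have hpos : 0 < 2 * a ^ 6 := by positivity
  refine ⟨hdet, hdet ▸ hpos, Matrix.PosDef.of_dotProduct_mulVec_pos ?_ ?_⟩
  · ext i j
    fin_cases i <;> fin_cases j <;> simp [Matrix.conjTranspose_apply]
  · intro v hv
    have hv' : v 0 ≠ 0 ∨ v 1 ≠ 0 := by
      by_contra h
      push_neg at h
      apply hv
      ext i; fin_cases i <;> simp [h.1, h.2]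
    have hmul : dotProduct (star v) (Matrix.mulVec (Matrix.of ![![fxx, fxy], ![fxy, fyy]]) v)
        = fxx * v 0 ^ 2 + 2 * fxy * (v 0 * v 1) + fyy * v 1 ^ 2 := by
      simp [dotProduct, Matrix.mulVec, Fin.sum_univ_two]
      ring
    rw [hmul, hfxx', hfyy', hfxy']
    have h1 : 0 < a ^ 2 := by positivity
    rcases hv' with h | h
    · nlinarith [sq_nonneg (a * v 0 - a ^ 2 * v 1), mul_pos h1 (pow_pos (abs_pos.mpr h) 2), sq_abs (v 0)]
    · nlinarith [sq_nonneg (3 * a * v 0 - 2 * a ^ 2 * v 1), mul_pos (mul_pos h1 h1) (pow_pos (abs_pos.mpr h) 2), sq_abs (v 1)]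
end

section
/- Let α : ℝ → ℝ be C² with all zeroes simple, β = α - α', A an antiderivative of α·β, and f(x,y) = (α(x) - β(x)²y)² - A(x). Then f has a strict local minimum at each point of {x | α(x) = 0} × {0} and no other critical points. -/
theorem local_minima_and_no_other_critical_points
    (α : ℝ → ℝ) (hα : ContDiff ℝ 2 α)
    (hsimple : ∀ x, α x = 0 → deriv α x ≠ 0)
    (β : ℝ → ℝ) (hβ : ∀ x, β x = α x - deriv α x)
    (A : ℝ → ℝ) (hA : ∀ x, HasDerivAt A (α x * β x) x)
    (f : ℝ × ℝ → ℝ)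
    (hf : ∀ x y, f (x, y) = (α x - (β x) ^ 2 * y) ^ 2 - A x) :
    (∀ x : ℝ, α x = 0 →
      ∀ᶠ p in nhdsWithin ((x, 0) : ℝ × ℝ) {(x, 0)}ᶜ, f (x, 0) < f p) ∧
    (∀ p : ℝ × ℝ, fderiv ℝ f p = 0 → α p.1 = 0 ∧ p.2 = 0) := by
  have hαd : Differentiable ℝ α := hα.differentiable (by norm_num)
  have hα'd : Differentiable ℝ (deriv α) := by
    have h2 : ContDiff ℝ (1 + 1) α := by norm_num; exact hα
    exact ((contDiff_succ_iff_deriv.mp h2).2.2).differentiable one_ne_zero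
  have hβeq : β = fun x => α x - deriv α x := funext hβ
  have hβha : ∀ x, HasDerivAt β (deriv α x - deriv (deriv α) x) x := by
    intro x
    rw [hβeq]
    exact ((hαd x).hasDerivAt).sub ((hα'd x).hasDerivAt)
  have hAd : Differentiable ℝ A := fun x => (hA x).differentiableAt
  constructor
  · -- strict local minimum part
    intro x₀ hx0
    set c := deriv α x₀ with hc
    have hcne : c ≠ 0 := hsimple x₀ hx0
    have hβx0 : β x₀ = -c := by rw [hβ]; rw [hx0]; ring
    -- derivative of α*β at x₀ is -c²
    have hprod : HasDerivAt (fun x => α x * β x) (-(c * c)) x₀ := by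
      have := ((hαd x₀).hasDerivAt).mul (hβha x₀)
      exact this.congr_deriv (by rw [hβx0, hx0, ← hc]; ring)
    have hslope : Filter.Tendsto (slope (fun x => α x * β x) x₀) (nhdsWithin x₀ {x₀}ᶜ)
        (nhds (-(c * c))) := hasDerivAt_iff_tendsto_slope.mp hprod
    have hlt : -(c * c) < 0 := by nlinarith [mul_self_pos.mpr hcne]
    have hmem : (slope (fun x => α x * β x) x₀) ⁻¹' (Set.Iio 0) ∈
        nhdsWithin x₀ {x₀}ᶜ := hslope (Iio_mem_nhds hlt)
    rw [Metric.mem_nhdsWithin_iff] at hmem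
    obtain ⟨ε, hε, hball⟩ := hmem
    -- sign of α z * β z for z near x₀, z ≠ x₀
    have hsign : ∀ z, z ≠ x₀ → |z - x₀| < ε → α z * β z / (z - x₀) < 0 := by
      intro z hz hdz
      have hzmem : z ∈ Metric.ball x₀ ε ∩ {x₀}ᶜ := by
        constructor
        · simpa [Real.dist_eq] using hdz
        · exact hz
      have := hball hzmem
      simp only [Set.mem_preimage, Set.mem_Iio, slope_def_field] at this
      have : (α z * β z - α x₀ * β x₀) / (z - x₀) < 0 := by
        simpa [div_eq_inv_mul, slope] using this
      rw [hx0] at this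
      simpa using this
    -- A x < A x₀ for x ≠ x₀ near
    have hAlt : ∀ x, x ≠ x₀ → |x - x₀| < ε → A x < A x₀ := by
      intro x hx hdx
      rcases lt_or_gt_of_ne hx with hlt' | hgt'
      · -- x < x₀ : A strictly increasing on [x, x₀]
        have hmono : StrictMonoOn A (Set.Icc x x₀) := by
          apply strictMonoOn_of_deriv_pos (convex_Icc x x₀) (hAd.continuous.continuousOn)
          intro z hz
          rw [interior_Icc] at hz
          rw [(hA z).deriv]
          have hzne : z ≠ x₀ := ne_of_lt hz.2
          have hdz : |z - x₀| < ε := by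
            rw [abs_lt]
            constructor
            · have : x - x₀ < z - x₀ := by linarith [hz.1]
              have hx' : -ε < x - x₀ := (abs_lt.mp hdx).1
              linarith
            · linarith [hz.2]
          have := hsign z hzne hdz
          have hzneg : z - x₀ < 0 := by linarith [hz.2]
          by_contra hcon
          push_neg at hcon
          have : 0 ≤ α z * β z / (z - x₀) := by
            rw [div_nonneg_iff]
            right
            exact ⟨by linarith, le_of_lt hzneg⟩
          linarith
        have := hmono (Set.left_mem_Icc.mpr (le_of_lt hlt'))
          (Set.right_mem_Icc.mpr (le_of_lt hlt')) hlt'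
        exact this
      · -- x₀ < x : A strictly decreasing on [x₀, x]
        have hanti : StrictAntiOn A (Set.Icc x₀ x) := by
          apply strictAntiOn_of_deriv_neg (convex_Icc x₀ x) (hAd.continuous.continuousOn)
          intro z hz
          rw [interior_Icc] at hz
          rw [(hA z).deriv]
          have hzne : z ≠ x₀ := ne_of_gt hz.1
          have hdz : |z - x₀| < ε := by
            rw [abs_lt]
            constructor
            · linarith [hz.1]
            · have hx' : x - x₀ < ε := (abs_lt.mp hdx).2
              linarith [hz.2]
          have := hsign z hzne hdz
          have hzpos : 0 < z - x₀ := by linarith [hz.1]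
          by_contra hcon
          push_neg at hcon
          have : α z * β z / (z - x₀) ≥ 0 := div_nonneg (by linarith) (le_of_lt hzpos)
          linarith
        exact hanti (Set.left_mem_Icc.mpr (le_of_lt hgt'))
          (Set.right_mem_Icc.mpr (le_of_lt hgt')) hgt'
    -- the eventually statement
    have hU : ∀ᶠ p in nhds ((x₀, (0:ℝ)) : ℝ × ℝ), |p.1 - x₀| < ε := by
      have hopen : IsOpen {p : ℝ × ℝ | |p.1 - x₀| < ε} := by
        have : Continuous fun p : ℝ × ℝ => |p.1 - x₀| :=
          (continuous_fst.sub continuous_const).abs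
        exact isOpen_lt this continuous_const
      have hmem0 : ((x₀, (0:ℝ)) : ℝ × ℝ) ∈ {p : ℝ × ℝ | |p.1 - x₀| < ε} := by
        simp [hε]
      exact hopen.eventually_mem hmem0
    filter_upwards [eventually_nhdsWithin_of_eventually_nhds hU, self_mem_nhdsWithin]
      with p hp hpne
    have hpne' : p ≠ (x₀, 0) := hpne
    have hfp : f p = (α p.1 - (β p.1) ^ 2 * p.2) ^ 2 - A p.1 := hf p.1 p.2
    have hfx0 : f (x₀, 0) = -A x₀ := by rw [hf, hx0]; ring
    rw [hfx0, hfp]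
    by_cases hx1 : p.1 = x₀
    · have hy : p.2 ≠ 0 := by
        intro hy0
        apply hpne'
        exact Prod.ext hx1 hy0
      rw [hx1, hx0, hβx0]
      have hne : (-c) ^ 2 * p.2 ≠ 0 :=
        mul_ne_zero (pow_ne_zero 2 (neg_ne_zero.mpr hcne)) hy
      have : (0:ℝ) < ((-c) ^ 2 * p.2) ^ 2 :=
        lt_of_le_of_ne (sq_nonneg _) (Ne.symm (pow_ne_zero 2 hne))
      nlinarith
    · have := hAlt p.1 hx1 hp
      nlinarith [sq_nonneg (α p.1 - (β p.1) ^ 2 * p.2)]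
  · -- no other critical points
    intro p hcrit
    have hfeq : f = fun q : ℝ × ℝ => (α q.1 - (β q.1) ^ 2 * q.2) ^ 2 - A q.1 :=
      funext fun q => hf q.1 q.2
    have hβd : Differentiable ℝ β := fun x => (hβha x).differentiableAt
    have hdiff : Differentiable ℝ f := by
      rw [hfeq]
      exact (((hαd.comp differentiable_fst).sub
        (((hβd.comp differentiable_fst).pow 2).mul differentiable_snd)).pow 2).sub
        (hAd.comp differentiable_fst)
    have hF0 : HasFDerivAt f 0 p := hcrit ▸ (hdiff p).hasFDerivAt
    set a := α p.1 with ha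
    set a' := deriv α p.1 with ha'
    set a'' := deriv (deriv α) p.1 with ha''
    set b := β p.1 with hb
    set y := p.2 with hy
    -- partial derivative in y
    have hLy : HasDerivAt (fun t : ℝ => ((p.1, t) : ℝ × ℝ)) (0, 1) p.2 :=
      (hasDerivAt_const p.2 p.1).prodMk (hasDerivAt_id p.2)
    have hcy : HasDerivAt (fun t => f (p.1, t)) ((0 : ℝ × ℝ →L[ℝ] ℝ) (0, 1)) p.2 :=
      hF0.comp_hasDerivAt p.2 hLy
    have hey : HasDerivAt (fun t => f (p.1, t)) (2 * (a - b ^ 2 * y) * (-(b ^ 2))) p.2 := by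
      have h1 : HasDerivAt (fun t : ℝ => a - b ^ 2 * t) (-(b ^ 2)) p.2 := by
        exact ((hasDerivAt_const p.2 a).sub ((hasDerivAt_id p.2).const_mul (b ^ 2))).congr_deriv (by ring)
      have h2 := (h1.pow 2).sub (hasDerivAt_const p.2 (A p.1))
      have heq : (fun t => f (p.1, t)) = fun t => (a - b ^ 2 * t) ^ 2 - A p.1 :=
        funext fun t => hf p.1 t
      rw [heq]
      exact h2.congr_deriv (by push_cast; ring)
    have eqy : 2 * (a - b ^ 2 * y) * (-(b ^ 2)) = 0 := by
      have := hey.unique hcy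
      simpa using this
    -- partial derivative in x
    have hLx : HasDerivAt (fun t : ℝ => ((t, p.2) : ℝ × ℝ)) (1, 0) p.1 :=
      (hasDerivAt_id p.1).prodMk (hasDerivAt_const p.1 p.2)
    have hcx : HasDerivAt (fun t => f (t, p.2)) ((0 : ℝ × ℝ →L[ℝ] ℝ) (1, 0)) p.1 :=
      hF0.comp_hasDerivAt p.1 hLx
    have hex : HasDerivAt (fun t => f (t, p.2))
        (2 * (a - b ^ 2 * y) * (a' - 2 * b * (a' - a'') * y) - a * b) p.1 := by
      have hg : HasDerivAt (fun t => α t - (β t) ^ 2 * p.2)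
          (a' - 2 * b * (a' - a'') * y) p.1 := by
        have hb2 : HasDerivAt (fun t => (β t) ^ 2 * p.2)
            (2 * b * (a' - a'') * y) p.1 := by
          have := ((hβha p.1).pow 2).mul_const p.2
          exact this.congr_deriv (by push_cast; ring)
        exact ((hαd p.1).hasDerivAt).sub hb2
      have h2 := (hg.pow 2).sub (hA p.1)
      have heq : (fun t => f (t, p.2)) = fun t => (α t - (β t) ^ 2 * p.2) ^ 2 - A t :=
        funext fun t => hf t p.2
      rw [heq]
      exact h2.congr_deriv (by push_cast; ring)
    have eqx : 2 * (a - b ^ 2 * y) * (a' - 2 * b * (a' - a'') * y) - a * b = 0 := by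
      have := hex.unique hcx
      simpa using this
    -- algebra
    have hbeq : b = a - a' := hβ p.1
    by_cases hb0 : b = 0
    · exfalso
      have haa' : a = a' := by rw [hb0] at hbeq; linarith
      rw [hb0] at eqx
      have h2a : a * a = 0 := by linear_combination eqx / 2 + a * haa'
      have ha0 : a = 0 := mul_self_eq_zero.mp h2a
      apply hsimple p.1 ha0
      rw [← ha', ← haa']
      exact ha0
    · have hu : a - b ^ 2 * y = 0 := by
        rcases mul_eq_zero.mp eqy with h | h
        · rcases mul_eq_zero.mp h with h' | h'
          · norm_num at h'
          · exact h'
        · exfalso; exact hb0 (pow_eq_zero_iff (n := 2) (by norm_num) |>.mp (by linarith))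
      rw [hu] at eqx
      have hab : a * b = 0 := by linarith
      have ha0 : a = 0 := by
        rcases mul_eq_zero.mp hab with h | h
        · exact h
        · exact absurd h hb0
      refine ⟨ha0, ?_⟩
      have : b ^ 2 * y = 0 := by rw [ha0] at hu; linarith
      rcases mul_eq_zero.mp this with h | h
      · exact absurd (pow_eq_zero_iff (n := 2) (by norm_num) |>.mp h) hb0
      · exact h
end

section
/- For every finite subset X of ℝⁿ with n ≥ 2, there exists a map F : ℝⁿ → ℝⁿ, polynomial in each coordinate, such that F(X) ⊆ ℝ × {0}^{n-1} and F has an inverse that is also polynomial in each coordinate. -/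
open Polynomial Finset

/-- Auxiliary predicate: `f` is given by a multivariate polynomial. -/
def IsPolyFun (n : ℕ) (f : (Fin n → ℝ) → ℝ) : Prop :=
  ∃ q : MvPolynomial (Fin n) ℝ, ∀ z, f z = MvPolynomial.eval z q

lemma isPolyFun_const (n : ℕ) (c : ℝ) : IsPolyFun n fun _ => c :=
  ⟨MvPolynomial.C c, by simp⟩

lemma isPolyFun_coord (n : ℕ) (i : Fin n) : IsPolyFun n fun z => z i :=
  ⟨MvPolynomial.X i, by simp⟩

lemma IsPolyFun.add {n f g} (hf : IsPolyFun n f) (hg : IsPolyFun n g) :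
    IsPolyFun n fun z => f z + g z := by
  obtain ⟨q, hq⟩ := hf; obtain ⟨r, hr⟩ := hg
  exact ⟨q + r, fun z => by simp [hq z, hr z]⟩

lemma IsPolyFun.mul {n f g} (hf : IsPolyFun n f) (hg : IsPolyFun n g) :
    IsPolyFun n fun z => f z * g z := by
  obtain ⟨q, hq⟩ := hf; obtain ⟨r, hr⟩ := hg
  exact ⟨q * r, fun z => by simp [hq z, hr z]⟩

lemma IsPolyFun.sub {n f g} (hf : IsPolyFun n f) (hg : IsPolyFun n g) :
    IsPolyFun n fun z => f z - g z := by
  obtain ⟨q, hq⟩ := hf; obtain ⟨r, hr⟩ := hg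
  exact ⟨q - r, fun z => by simp [hq z, hr z]⟩

lemma IsPolyFun.pow {n f} (hf : IsPolyFun n f) (k : ℕ) :
    IsPolyFun n fun z => f z ^ k := by
  induction k with
  | zero => simpa using isPolyFun_const n 1
  | succ k ih => simpa [pow_succ] using ih.mul hf

lemma isPolyFun_sum {n : ℕ} {ι : Type*} (s : Finset ι) (f : ι → (Fin n → ℝ) → ℝ)
    (h : ∀ i ∈ s, IsPolyFun n (f i)) : IsPolyFun n fun z => ∑ i ∈ s, f i z := by
  classical
  induction s using Finset.induction_on with
  | empty => simpa using isPolyFun_const n 0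
  | @insert a s ha ih =>
    simp only [Finset.sum_insert ha]
    exact (h a (mem_insert_self a s)).add (ih fun i hi => h i (mem_insert_of_mem hi))

lemma IsPolyFun.polyComp {n f} (hf : IsPolyFun n f) (p : Polynomial ℝ) :
    IsPolyFun n fun z => p.eval (f z) := by
  induction p using Polynomial.induction_on' with
  | add p q hp hq => simpa [Polynomial.eval_add] using hp.add hq
  | monomial k a =>
    simpa [Polynomial.eval_monomial] using (isPolyFun_const n a).mul (hf.pow k)

theorem exists_polynomial_coordinate_change
    (n : ℕ) (hn : 2 ≤ n) (X : Set (Fin n → ℝ)) (hX : X.Finite) :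
    ∃ F G : (Fin n → ℝ) → (Fin n → ℝ),
      (∀ j : Fin n, ∃ q : MvPolynomial (Fin n) ℝ, ∀ z, F z j = MvPolynomial.eval z q) ∧
      (∀ j : Fin n, ∃ q : MvPolynomial (Fin n) ℝ, ∀ z, G z j = MvPolynomial.eval z q) ∧
      Function.LeftInverse G F ∧ Function.RightInverse G F ∧
      (∀ x ∈ X, ∀ j : Fin n, j ≠ ⟨0, by omega⟩ → F x j = 0) := by
  classical
  set i0 : Fin n := ⟨0, by omega⟩ with hi0def
  -- Step 1: find `t` such that `x ↦ ∑ i, t^i * x i` is injective on `X`.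
  obtain ⟨t, ht⟩ : ∃ t : ℝ, ∀ x ∈ X, ∀ y ∈ X,
      (∑ i : Fin n, t ^ (i : ℕ) * x i) = (∑ i : Fin n, t ^ (i : ℕ) * y i) → x = y := by
    have hB : (⋃ x ∈ X, ⋃ y ∈ X,
        {s : ℝ | x ≠ y ∧ (∑ i : Fin n, (x i - y i) * s ^ (i : ℕ)) = 0}).Finite := by
      refine Set.Finite.biUnion hX fun x _ => Set.Finite.biUnion hX fun y _ => ?_
      by_cases hxy : x = y
      · simp [hxy]
      · obtain ⟨i, hi⟩ : ∃ i, x i - y i ≠ 0 := by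
          by_contra h
          push_neg at h
          exact hxy (funext fun i => by have := h i; linarith)
        have hP : (∑ j : Fin n, Polynomial.C (x j - y j) * Polynomial.X ^ (j : ℕ) : ℝ[X]) ≠ 0 := by
          intro h0
          have hco : ((∑ j : Fin n, Polynomial.C (x j - y j) * Polynomial.X ^ (j : ℕ) : ℝ[X])).coeff
              (i : ℕ) = x i - y i := by
            rw [Polynomial.finset_sum_coeff]
            rw [Finset.sum_eq_single i]
            · simp [sub_mul, Polynomial.coeff_sub, Polynomial.coeff_C_mul,
                Polynomial.coeff_X_pow]
            · intro j _ hj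
              have hne : (i : ℕ) ≠ (j : ℕ) := fun h => hj (Fin.ext h.symm)
              simp [sub_mul, Polynomial.coeff_sub, Polynomial.coeff_C_mul,
                Polynomial.coeff_X_pow, hne]
            · simp
          rw [h0] at hco
          simp at hco
          exact hi hco.symm
        refine (Polynomial.finite_setOf_isRoot hP).subset ?_
        intro s hs
        simp only [Set.mem_setOf_eq] at hs ⊢
        simp [Polynomial.IsRoot, Polynomial.eval_finset_sum, hs.2]
    obtain ⟨t, htB⟩ := hB.infinite_compl.nonempty
    refine ⟨t, fun x hx y hy hxy => ?_⟩
    by_contra hne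
    apply htB
    refine Set.mem_biUnion hx (Set.mem_biUnion hy ?_)
    refine ⟨hne, ?_⟩
    have hd : (∑ i : Fin n, (x i - y i) * t ^ (i : ℕ))
        = (∑ i : Fin n, t ^ (i : ℕ) * x i) - (∑ i : Fin n, t ^ (i : ℕ) * y i) := by
      rw [← Finset.sum_sub_distrib]
      exact Finset.sum_congr rfl fun i _ => by ring
    rw [hd, hxy, sub_self]
  set L : (Fin n → ℝ) → ℝ := fun x => ∑ i : Fin n, t ^ (i : ℕ) * x i with hLdef
  -- Step 2: interpolation polynomials
  set g : Fin n → ℝ → ℝ := fun j s =>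
    if h : ∃ x, x ∈ X ∧ L x = s then h.choose j else 0 with hgdef
  set p : Fin n → Polynomial ℝ :=
    fun j => Lagrange.interpolate (hX.toFinset.image L) id (g j) with hpdef
  have hp : ∀ j : Fin n, ∀ x ∈ X, (p j).eval (L x) = x j := by
    intro j x hx
    have hmem : L x ∈ hX.toFinset.image L :=
      Finset.mem_image_of_mem L (hX.mem_toFinset.mpr hx)
    have heval := Lagrange.eval_interpolate_at_node (r := g j)
      (Function.injective_id.injOn) hmem
    simp only [id_eq] at heval
    have hgx : g j (L x) = x j := by
      have hex : ∃ y, y ∈ X ∧ L y = L x := ⟨x, hx, rfl⟩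
      have hchoose : hex.choose = x := ht _ hex.choose_spec.1 x hx hex.choose_spec.2
      show (if h : ∃ y, y ∈ X ∧ L y = L x then h.choose j else 0) = x j
      rw [dif_pos hex, hchoose]
    rw [hpdef]
    rw [heval, hgx]
  -- Definitions of F and G
  set F : (Fin n → ℝ) → (Fin n → ℝ) := fun z j =>
    if j = i0 then L z else z j - (p j).eval (L z) with hFdef
  set G : (Fin n → ℝ) → (Fin n → ℝ) := fun w j =>
    if j = i0 then
      w i0 - ∑ i ∈ Finset.univ.erase i0, t ^ (i : ℕ) * (w i + (p i).eval (w i0))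
    else w j + (p j).eval (w i0) with hGdef
  -- decomposition of L
  have hLsplit : ∀ z : Fin n → ℝ,
      L z = z i0 + ∑ i ∈ Finset.univ.erase i0, t ^ (i : ℕ) * z i := by
    intro z
    have h1 : L z = ∑ i : Fin n, t ^ (i : ℕ) * z i := rfl
    rw [h1, ← Finset.add_sum_erase Finset.univ (fun i : Fin n => t ^ (i : ℕ) * z i)
      (Finset.mem_univ i0)]
    have : t ^ ((i0 : Fin n) : ℕ) * z i0 = z i0 := by
      rw [hi0def]
      norm_num
    rw [this]
  have hGF : Function.LeftInverse G F := by
    intro z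
    funext j
    have hFi0 : F z i0 = L z := by simp [hFdef]
    by_cases hj : j = i0
    · subst hj
      simp only [hGdef, hFi0, if_pos rfl]
      have hsum : ∑ i ∈ Finset.univ.erase i0, t ^ (i : ℕ) * (F z i + (p i).eval (L z))
          = ∑ i ∈ Finset.univ.erase i0, t ^ (i : ℕ) * z i := by
        refine Finset.sum_congr rfl fun i hi => ?_
        have hine : i ≠ i0 := (Finset.mem_erase.mp hi).1
        simp only [hFdef, if_neg hine]
        ring
      rw [hsum, hLsplit z]
      ring
    · simp only [hGdef, if_neg hj, hFi0]
      simp only [hFdef, if_neg hj]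
      ring
  have hFG : Function.RightInverse G F := by
    intro w
    funext j
    have hGi0 : G w i0 = w i0 -
        ∑ i ∈ Finset.univ.erase i0, t ^ (i : ℕ) * (w i + (p i).eval (w i0)) := by
      simp [hGdef]
    have hLG : L (G w) = w i0 := by
      rw [hLsplit (G w), hGi0]
      have hsum : ∑ i ∈ Finset.univ.erase i0, t ^ (i : ℕ) * (G w i)
          = ∑ i ∈ Finset.univ.erase i0, t ^ (i : ℕ) * (w i + (p i).eval (w i0)) := by
        refine Finset.sum_congr rfl fun i hi => ?_
        have hine : i ≠ i0 := (Finset.mem_erase.mp hi).1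
        simp [hGdef, hine]
      rw [hsum]
      ring
    by_cases hj : j = i0
    · subst hj
      simp only [hFdef, if_pos rfl, hLG]
    · simp only [hFdef, if_neg hj, hLG]
      simp only [hGdef, if_neg hj]
      ring
  have hLpoly : IsPolyFun n fun z => L z :=
    isPolyFun_sum Finset.univ (fun (i : Fin n) z => t ^ (i : ℕ) * z i) fun i _ =>
      (isPolyFun_const n (t ^ (i : ℕ))).mul (isPolyFun_coord n i)
  refine ⟨F, G, ?_, ?_, hGF, hFG, ?_⟩
  · intro j
    by_cases hj : j = i0
    · subst hj
      obtain ⟨q, hq⟩ := hLpoly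
      exact ⟨q, fun z => by simpa [hFdef] using hq z⟩
    · have hpoly : IsPolyFun n fun z => z j - (p j).eval (L z) :=
        (isPolyFun_coord n j).sub (hLpoly.polyComp (p j))
      obtain ⟨q, hq⟩ := hpoly
      exact ⟨q, fun z => by simpa [hFdef, if_neg hj] using hq z⟩
  · intro j
    by_cases hj : j = i0
    · subst hj
      have hpoly : IsPolyFun n fun w : Fin n → ℝ =>
          w i0 - ∑ i ∈ Finset.univ.erase i0, t ^ (i : ℕ) * (w i + (p i).eval (w i0)) := by
        refine (isPolyFun_coord n i0).sub ?_
        refine isPolyFun_sum _ _ fun i _ => ?_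
        exact (isPolyFun_const n (t ^ (i : ℕ))).mul
          ((isPolyFun_coord n i).add ((isPolyFun_coord n i0).polyComp (p i)))
      obtain ⟨q, hq⟩ := hpoly
      exact ⟨q, fun w => by simpa [hGdef] using hq w⟩
    · have hpoly : IsPolyFun n fun w : Fin n → ℝ => w j + (p j).eval (w i0) :=
        (isPolyFun_coord n j).add ((isPolyFun_coord n i0).polyComp (p j))
      obtain ⟨q, hq⟩ := hpoly
      exact ⟨q, fun w => by simpa [hGdef, if_neg hj] using hq w⟩
  · intro x hx j hj
    have hj' : j ≠ i0 := hj
    simp only [hFdef, if_neg hj']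
    rw [hp j x hx, sub_self]
end

section
/- For any finite subset X of ℝⁿ with n ≥ 2, there exists a polynomial function P : ℝⁿ → ℝ that has a strict local minimum at every point of X and has no critical points outside X. -/
open Polynomial MvPolynomial

noncomputable def Lclm (n : ℕ) (c : ℝ) : (Fin n → ℝ) →L[ℝ] ℝ :=
  ∑ j : Fin n, (c ^ (j:ℕ)) • ContinuousLinearMap.proj j

lemma Lclm_apply (n : ℕ) (c : ℝ) (x : Fin n → ℝ) :
    Lclm n c x = ∑ j : Fin n, c ^ (j:ℕ) * x j := by
  simp [Lclm, ContinuousLinearMap.sum_apply, ContinuousLinearMap.proj_apply, smul_eq_mul]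

lemma Lclm_single (n : ℕ) (c : ℝ) (k : Fin n) :
    Lclm n c (Pi.single k 1) = c ^ (k:ℕ) := by
  rw [Lclm_apply]
  rw [Finset.sum_eq_single k]
  · simp
  · intro j _ hj
    simp [Pi.single_apply, hj.symm]
  · simp

noncomputable def LP (n : ℕ) (c : ℝ) : MvPolynomial (Fin n) ℝ :=
  ∑ j : Fin n, MvPolynomial.C (c ^ (j:ℕ)) * MvPolynomial.X j

lemma eval_aeval (n : ℕ) (c : ℝ) (p : Polynomial ℝ) (x : Fin n → ℝ) :
    MvPolynomial.eval x (Polynomial.aeval (LP n c) p) = p.eval (Lclm n c x) := by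
  have h1 : MvPolynomial.eval x (LP n c) = Lclm n c x := by
    simp [LP, Lclm_apply]
  rw [← h1, Polynomial.aeval_def, Polynomial.hom_eval₂]
  have h2 : (MvPolynomial.eval x).comp (algebraMap ℝ (MvPolynomial (Fin n) ℝ)) = RingHom.id ℝ := by
    ext r; simp [MvPolynomial.algebraMap_eq]
  rw [h2]
  rfl

lemma exists_good_c (n : ℕ) (X : Set (Fin n → ℝ)) (hX : X.Finite) :
    ∃ c : ℝ, Set.InjOn (Lclm n c) X := by
  classical
  set g : (Fin n → ℝ) × (Fin n → ℝ) → Set ℝ :=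
    fun pq => {c : ℝ | pq.1 ≠ pq.2 ∧ ∑ j : Fin n, c ^ (j:ℕ) * (pq.1 j - pq.2 j) = 0} with hg
  have hfin : ∀ pq : (Fin n → ℝ) × (Fin n → ℝ), (g pq).Finite := by
    rintro ⟨p, q⟩
    by_cases hpq : p = q
    · convert Set.finite_empty
      ext c; simp [hg, hpq]
    · obtain ⟨j₀, hj₀⟩ := Function.ne_iff.mp hpq
      set d : Polynomial ℝ := ∑ j : Fin n, Polynomial.C (p j - q j) * Polynomial.X ^ (j:ℕ) with hd
      have hdne : d ≠ 0 := by
        intro h0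
        have : d.coeff (j₀:ℕ) = p j₀ - q j₀ := by
          rw [hd, Polynomial.finset_sum_coeff, Finset.sum_eq_single j₀]
          · rw [Polynomial.coeff_C_mul, Polynomial.coeff_X_pow]
            simp
          · intro j _ hj
            have hne : (j₀:ℕ) ≠ (j:ℕ) := fun h => hj (Fin.val_injective h.symm)
            rw [Polynomial.coeff_C_mul, Polynomial.coeff_X_pow]
            simp [hne]
          · simp
        rw [h0] at this
        simp at this
        exact hj₀ (by linarith [sub_eq_zero.mp this.symm])
      apply Set.Finite.subset (Polynomial.finite_setOf_isRoot hdne)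
      rintro c ⟨-, hc⟩
      simp only [Set.mem_setOf_eq, Polynomial.IsRoot, hd, Polynomial.eval_finset_sum]
      simpa [mul_comm] using hc
  have hbig : (⋃ pq ∈ X ×ˢ X, g pq).Finite :=
    Set.Finite.biUnion (hX.prod hX) (fun pq _ => hfin pq)
  obtain ⟨c, hc⟩ := (hbig.infinite_compl).nonempty
  refine ⟨c, fun p hp q hq hpq => ?_⟩
  by_contra hne
  apply hc
  refine Set.mem_biUnion (show (p, q) ∈ X ×ˢ X from ⟨hp, hq⟩) ?_
  have h2 : ∑ j : Fin n, c ^ (j:ℕ) * (p j - q j) = Lclm n c p - Lclm n c q := by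
    rw [Lclm_apply, Lclm_apply, ← Finset.sum_sub_distrib]
    exact Finset.sum_congr rfl fun j _ => by ring
  exact ⟨hne, by rw [h2, hpq, sub_self]⟩

theorem exists_polynomial_with_prescribed_minima
    (n : ℕ) (hn : 2 ≤ n) (X : Set (Fin n → ℝ)) (hX : X.Finite) :
    ∃ P : MvPolynomial (Fin n) ℝ,
      (∀ x ∈ X, ∀ᶠ y in nhdsWithin x {x}ᶜ,
        MvPolynomial.eval x P < MvPolynomial.eval y P) ∧
      (∀ x : Fin n → ℝ,
        fderiv ℝ (fun z => MvPolynomial.eval z P) x = 0 → x ∈ X) := by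
  classical
  set i0 : Fin n := ⟨0, by omega⟩ with hi0
  rcases Set.eq_empty_or_nonempty X with hXe | hXne
  · refine ⟨MvPolynomial.X i0, ?_, ?_⟩
    · simp [hXe]
    · intro x hx
      exfalso
      have heq : (fun z : Fin n → ℝ => MvPolynomial.eval z (MvPolynomial.X i0))
          = fun z => z i0 := by
        funext z; simp
      rw [heq] at hx
      have hfd : HasFDerivAt (fun z : Fin n → ℝ => z i0)
          (ContinuousLinearMap.proj i0 : (Fin n → ℝ) →L[ℝ] ℝ) x := by
        exact (ContinuousLinearMap.proj i0 : (Fin n → ℝ) →L[ℝ] ℝ).hasFDerivAt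
      rw [hfd.fderiv] at hx
      have := DFunLike.congr_fun hx (Pi.single i0 1)
      simp at this
  · -- nonempty case
    obtain ⟨c, hc⟩ := exists_good_c n X hX
    set i1 : Fin n := ⟨1, by omega⟩ with hi1
    have hi01 : i0 ≠ i1 := by
      intro h
      have := congrArg Fin.val h
      simp [hi0, hi1] at this
    set s2 : Finset (Fin n) := Finset.univ.filter (fun j => 2 ≤ (j:ℕ)) with hs2
    have hi0s2 : i0 ∉ s2 := by simp [hs2, hi0]
    have hi1s2 : i1 ∉ s2 := by simp [hs2, hi1]
    set ℓ : (Fin n → ℝ) →L[ℝ] ℝ := Lclm n c with hℓ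
    set T : Finset ℝ := Finset.image (fun x => ℓ x) hX.toFinset with hT
    have hTmem : ∀ x ∈ X, ℓ x ∈ T := fun x hx =>
      Finset.mem_image_of_mem _ (hX.mem_toFinset.mpr hx)
    set v : ℝ → (Fin n → ℝ) := fun s => if h : ∃ x ∈ X, ℓ x = s then h.choose else 0 with hv
    have hvmem : ∀ s ∈ T, v s ∈ X ∧ ℓ (v s) = s := by
      intro s hs
      rw [hT, Finset.mem_image] at hs
      obtain ⟨x, hx1, hx2⟩ := hs
      have hex : ∃ x ∈ X, ℓ x = s := ⟨x, hX.mem_toFinset.mp hx1, hx2⟩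
      rw [hv]
      dsimp only
      rw [dif_pos hex]
      exact ⟨hex.choose_spec.1, hex.choose_spec.2⟩
    have hvx : ∀ x ∈ X, v (ℓ x) = x := by
      intro x hx
      obtain ⟨h1, h2⟩ := hvmem _ (hTmem x hx)
      exact hc h1 hx h2
    have hℓcancel : ∀ y z : Fin n → ℝ, ℓ y = ℓ z → (∀ j : Fin n, j ≠ i0 → y j = z j) →
        y i0 = z i0 := by
      intro y z hyz hcoord
      have hyz' : ∑ j : Fin n, c ^ (j:ℕ) * y j = ∑ j : Fin n, c ^ (j:ℕ) * z j := by
        rw [← Lclm_apply, ← Lclm_apply, ← hℓ]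
        exact hyz
      have hdiff : ∑ j : Fin n, c ^ (j:ℕ) * (y j - z j) = 0 := by
        have hsplit : ∑ j : Fin n, c ^ (j:ℕ) * (y j - z j)
            = ∑ j : Fin n, c ^ (j:ℕ) * y j - ∑ j : Fin n, c ^ (j:ℕ) * z j := by
          rw [← Finset.sum_sub_distrib]
          exact Finset.sum_congr rfl fun j _ => by ring
        rw [hsplit, hyz', sub_self]
      rw [Finset.sum_eq_single i0] at hdiff
      · have h0 : (i0 : ℕ) = 0 := rfl
        rw [h0, pow_zero, one_mul, sub_eq_zero] at hdiff
        exact hdiff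
      · intro j _ hj
        rw [hcoord j hj, sub_self, mul_zero]
      · intro h
        exact absurd (Finset.mem_univ i0) h
    set q : Polynomial ℝ := ∏ s ∈ T, (Polynomial.X - Polynomial.C s) with hqdef
    have hqeval : ∀ t : ℝ, q.eval t = ∏ s ∈ T, (t - s) := by
      intro t
      rw [hqdef, Polynomial.eval_prod]
      simp
    have hqzero : ∀ t : ℝ, q.eval t = 0 ↔ t ∈ T := by
      intro t
      rw [hqeval, Finset.prod_eq_zero_iff]
      constructor
      · rintro ⟨s, hs, h⟩
        rwa [sub_eq_zero.mp h]
      · intro ht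
        exact ⟨t, ht, sub_self t⟩
    have hqd_node : ∀ s ∈ T, q.derivative.eval s ≠ 0 := by
      intro s hs
      have hsplit : q = (Polynomial.X - Polynomial.C s) *
          ∏ s' ∈ T.erase s, (Polynomial.X - Polynomial.C s') := by
        exact (Finset.mul_prod_erase T _ hs).symm
      have heq : q.derivative.eval s =
          (∏ s' ∈ T.erase s, (Polynomial.X - Polynomial.C s')).eval s := by
        rw [hsplit, Polynomial.derivative_mul]
        simp
      rw [heq, Polynomial.eval_prod]
      rw [Finset.prod_ne_zero_iff]
      intro s' hs'
      simp only [Polynomial.eval_sub, Polynomial.eval_X, Polynomial.eval_C]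
      exact sub_ne_zero.mpr (Finset.ne_of_mem_erase hs').symm
    have hTne : T.Nonempty := by
      obtain ⟨x, hx⟩ := hXne
      exact ⟨ℓ x, hTmem x hx⟩
    have hqd_ne : q.derivative ≠ 0 := by
      intro h0
      have hdeg0 : q.natDegree = 0 := Polynomial.natDegree_eq_zero_of_derivative_eq_zero h0
      have hdeg : q.natDegree = T.card := by
        rw [hqdef, Polynomial.natDegree_prod]
        · simp [Polynomial.natDegree_X_sub_C]
        · intro s _
          exact Polynomial.X_sub_C_ne_zero s
      have := Finset.card_pos.mpr hTne
      omega
    obtain ⟨c₀, hc₀⟩ : ∃ c₀ : ℝ, q.derivative.eval c₀ ≠ 0 := by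
      obtain ⟨c₀, h⟩ := ((Polynomial.finite_setOf_isRoot hqd_ne).infinite_compl).nonempty
      exact ⟨c₀, h⟩
    set m : Polynomial ℝ := Polynomial.X - Polynomial.C c₀ with hm
    set γ : Fin n → Polynomial ℝ := fun j => Lagrange.interpolate T id (fun s => v s j) with hγdef
    have hγ : ∀ (j : Fin n), ∀ s ∈ T, (γ j).eval s = v s j := by
      intro j s hs
      rw [hγdef]
      exact Lagrange.eval_interpolate_at_node _ (Set.injOn_id _) hs
    set P₁ : Polynomial ℝ := q.derivative * q.derivative with hP₁
    set P₂ : Polynomial ℝ := P₁ * γ i1 + q * m with hP₂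
    set a : (Fin n → ℝ) → ℝ := fun y => P₁.eval (ℓ y) * y i1 - P₂.eval (ℓ y) with ha
    set F : MvPolynomial (Fin n) ℝ :=
      Polynomial.aeval (LP n c) P₁ * MvPolynomial.X i1 - Polynomial.aeval (LP n c) P₂ with hF
    set P : MvPolynomial (Fin n) ℝ := F * F +
      (Polynomial.aeval (LP n c) q * Polynomial.aeval (LP n c) q +
        ∑ j ∈ s2, (MvPolynomial.X j - Polynomial.aeval (LP n c) (γ j)) *
          (MvPolynomial.X j - Polynomial.aeval (LP n c) (γ j))) with hPdef
    set f : (Fin n → ℝ) → ℝ := fun y => a y * a y +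
      (q.eval (ℓ y) * q.eval (ℓ y) +
        ∑ j ∈ s2, (y j - (γ j).eval (ℓ y)) * (y j - (γ j).eval (ℓ y))) with hfdef
    have hPf : ∀ y, MvPolynomial.eval y P = f y := by
      intro y
      rw [hPdef, hfdef, hF, ha]
      simp only [map_add, map_mul, map_sub, map_sum, MvPolynomial.eval_X, hℓ, eval_aeval]
    -- the key characterization of the zero set
    have hxeq : ∀ y : Fin n → ℝ, q.eval (ℓ y) = 0 → a y = 0 →
        (∀ j ∈ s2, y j = (γ j).eval (ℓ y)) → y ∈ X := by
      intro y hq0 ha0 hjs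
      have htT : ℓ y ∈ T := (hqzero (ℓ y)).mp hq0
      obtain ⟨hzX, hzℓ⟩ := hvmem (ℓ y) htT
      have hq'ne := hqd_node (ℓ y) htT
      have hP₁t : P₁.eval (ℓ y) ≠ 0 := by
        rw [hP₁, Polynomial.eval_mul]
        exact mul_ne_zero hq'ne hq'ne
      have hγval : ∀ j : Fin n, (γ j).eval (ℓ y) = v (ℓ y) j := fun j => hγ j (ℓ y) htT
      have hy1 : y i1 = v (ℓ y) i1 := by
        rw [ha] at ha0
        simp only [hP₂, Polynomial.eval_add, Polynomial.eval_mul, hq0, zero_mul,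
          add_zero, sub_eq_zero] at ha0
        have := mul_left_cancel₀ hP₁t ha0
        rw [this, hγval]
      have hyj : ∀ j : Fin n, j ≠ i0 → y j = v (ℓ y) j := by
        intro j hj
        have hjv : (j : ℕ) ≠ 0 := by
          intro h
          exact hj (Fin.ext (by simp [hi0, h]))
        rcases Nat.lt_or_ge (j:ℕ) 2 with h2 | h2
        · have hj1 : j = i1 := Fin.ext (by simp [hi1]; omega)
          rw [hj1]
          exact hy1
        · have hjs2 : j ∈ s2 := by
            rw [hs2]
            exact Finset.mem_filter.mpr ⟨Finset.mem_univ _, h2⟩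
          rw [hjs j hjs2, hγval]
      have hy0 : y i0 = v (ℓ y) i0 := hℓcancel y (v (ℓ y)) hzℓ.symm hyj
      have hfin : y = v (ℓ y) := by
        funext j
        by_cases hj : j = i0
        · rw [hj]; exact hy0
        · exact hyj j hj
      rw [hfin]
      exact hzX
    -- value zero on X
    have hfX : ∀ x ∈ X, f x = 0 := by
      intro x hx
      have htT : ℓ x ∈ T := hTmem x hx
      have hq0 : q.eval (ℓ x) = 0 := (hqzero (ℓ x)).mpr htT
      have hγval : ∀ j : Fin n, (γ j).eval (ℓ x) = x j := by
        intro j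
        rw [hγ j (ℓ x) htT, hvx x hx]
      have ha0 : a x = 0 := by
        rw [ha]
        simp only [hP₂, Polynomial.eval_add, Polynomial.eval_mul, hq0, zero_mul, add_zero,
          hγval i1, sub_self]
      have hsum0 : ∑ j ∈ s2, (x j - Polynomial.eval (ℓ x) (γ j)) *
          (x j - Polynomial.eval (ℓ x) (γ j)) = 0 :=
        Finset.sum_eq_zero fun j _ => by rw [hγval j, sub_self, zero_mul]
      rw [hfdef]
      dsimp only
      rw [ha0, hq0, hsum0]
      ring
    -- nonnegativity
    have hfnn : ∀ y, 0 ≤ f y := by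
      intro y
      rw [hfdef]
      apply add_nonneg (mul_self_nonneg _)
      apply add_nonneg (mul_self_nonneg _)
      exact Finset.sum_nonneg fun j _ => mul_self_nonneg _
    -- zero implies membership
    have hf0 : ∀ y, f y = 0 → y ∈ X := by
      intro y hy
      rw [hfdef] at hy
      have h1 := (add_eq_zero_iff_of_nonneg (mul_self_nonneg _)
        (add_nonneg (mul_self_nonneg _) (Finset.sum_nonneg fun j _ => mul_self_nonneg _))).mp hy
      have h2 := (add_eq_zero_iff_of_nonneg (mul_self_nonneg _)
        (Finset.sum_nonneg fun j _ => mul_self_nonneg _)).mp h1.2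
      have ha0 : a y = 0 := by
        have := mul_self_eq_zero.mp h1.1
        exact this
      have hq0 : q.eval (ℓ y) = 0 := mul_self_eq_zero.mp h2.1
      have hjs : ∀ j ∈ s2, y j = (γ j).eval (ℓ y) := by
        intro j hj
        have := (Finset.sum_eq_zero_iff_of_nonneg (fun j _ => mul_self_nonneg _)).mp h2.2 j hj
        have := mul_self_eq_zero.mp this
        linarith [sub_eq_zero.mp this]
      exact hxeq y hq0 ha0 hjs
    -- derivative machinery
    have hpoly : ∀ (p : Polynomial ℝ) (x : Fin n → ℝ),
        HasFDerivAt (fun y => p.eval (ℓ y)) (p.derivative.eval (ℓ x) • ℓ) x := by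
      intro p x
      exact HasDerivAt.comp_hasFDerivAt x (p.hasDerivAt (ℓ x)) ℓ.hasFDerivAt
    have hproj : ∀ (j : Fin n) (x : Fin n → ℝ),
        HasFDerivAt (fun y : Fin n → ℝ => y j)
          (ContinuousLinearMap.proj j : (Fin n → ℝ) →L[ℝ] ℝ) x := by
      intro j x
      exact (ContinuousLinearMap.proj j : (Fin n → ℝ) →L[ℝ] ℝ).hasFDerivAt
    have hA : ∀ x : Fin n → ℝ, HasFDerivAt a
        ((P₁.eval (ℓ x) • (ContinuousLinearMap.proj i1 : (Fin n → ℝ) →L[ℝ] ℝ)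
          + x i1 • (P₁.derivative.eval (ℓ x) • ℓ))
          - P₂.derivative.eval (ℓ x) • ℓ) x := by
      intro x
      exact ((hpoly P₁ x).mul (hproj i1 x)).sub (hpoly P₂ x)
    set D : (Fin n → ℝ) → ((Fin n → ℝ) →L[ℝ] ℝ) := fun x =>
      (a x • ((P₁.eval (ℓ x) • (ContinuousLinearMap.proj i1 : (Fin n → ℝ) →L[ℝ] ℝ)
          + x i1 • (P₁.derivative.eval (ℓ x) • ℓ)) - P₂.derivative.eval (ℓ x) • ℓ)
        + a x • ((P₁.eval (ℓ x) • (ContinuousLinearMap.proj i1 : (Fin n → ℝ) →L[ℝ] ℝ)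
          + x i1 • (P₁.derivative.eval (ℓ x) • ℓ)) - P₂.derivative.eval (ℓ x) • ℓ)) +
      ((q.eval (ℓ x) • (q.derivative.eval (ℓ x) • ℓ)
          + q.eval (ℓ x) • (q.derivative.eval (ℓ x) • ℓ)) +
       ∑ j ∈ s2, ((x j - (γ j).eval (ℓ x)) •
            ((ContinuousLinearMap.proj j : (Fin n → ℝ) →L[ℝ] ℝ)
              - (γ j).derivative.eval (ℓ x) • ℓ)
          + (x j - (γ j).eval (ℓ x)) •
            ((ContinuousLinearMap.proj j : (Fin n → ℝ) →L[ℝ] ℝ)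
              - (γ j).derivative.eval (ℓ x) • ℓ))) with hD
    have hDf : ∀ x, HasFDerivAt f (D x) x := by
      intro x
      exact ((hA x).mul (hA x)).add
        (((hpoly q x).mul (hpoly q x)).add
          (HasFDerivAt.fun_sum fun j _ =>
            ((hproj j x).sub (hpoly (γ j) x)).mul ((hproj j x).sub (hpoly (γ j) x))))
    have hfD : ∀ x, fderiv ℝ (fun z => MvPolynomial.eval z P) x = D x := by
      intro x
      have heq : (fun z : Fin n → ℝ => MvPolynomial.eval z P) = f := funext hPf
      rw [heq]
      exact (hDf x).fderiv
    have happly : ∀ x u : Fin n → ℝ, D x u =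
        (2 * a x * (x i1 * P₁.derivative.eval (ℓ x) - P₂.derivative.eval (ℓ x))
          + 2 * q.eval (ℓ x) * q.derivative.eval (ℓ x)
          - ∑ j ∈ s2, (2 * (x j - (γ j).eval (ℓ x)) * (γ j).derivative.eval (ℓ x))) * ℓ u
        + (2 * a x * P₁.eval (ℓ x)) * u i1
        + ∑ j ∈ s2, (2 * (x j - (γ j).eval (ℓ x))) * u j := by
      intro x u
      rw [hD]
      dsimp only
      simp only [ContinuousLinearMap.add_apply, ContinuousLinearMap.sub_apply,
        ContinuousLinearMap.smul_apply, ContinuousLinearMap.sum_apply,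
        ContinuousLinearMap.proj_apply, smul_eq_mul]
      have hmerge : ∑ j ∈ s2, ((x j - (γ j).eval (ℓ x))
              * (u j - (γ j).derivative.eval (ℓ x) * ℓ u)
            + (x j - (γ j).eval (ℓ x)) * (u j - (γ j).derivative.eval (ℓ x) * ℓ u))
          = ∑ j ∈ s2, (2 * (x j - (γ j).eval (ℓ x))) * u j
            - (∑ j ∈ s2, (2 * (x j - (γ j).eval (ℓ x)) * (γ j).derivative.eval (ℓ x))) * ℓ u := by
        rw [Finset.sum_mul, ← Finset.sum_sub_distrib]
        exact Finset.sum_congr rfl fun j _ => by ring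
      rw [hmerge]
      ring
    refine ⟨P, ?_, ?_⟩
    · -- strict local minima
      intro x hx
      have hXx : (X \ {x}).Finite := hX.subset Set.diff_subset
      have hopen : IsOpen (X \ {x})ᶜ := hXx.isClosed.isOpen_compl
      have hxmem : x ∈ (X \ {x})ᶜ := by simp
      have hnhds : (X \ {x})ᶜ ∈ nhdsWithin x {x}ᶜ :=
        nhdsWithin_le_nhds (hopen.mem_nhds hxmem)
      filter_upwards [hnhds, self_mem_nhdsWithin] with y hy1 hy2
      rw [hPf, hPf, hfX x hx]
      have hyX : y ∉ X := fun hyX => hy1 ⟨hyX, hy2⟩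
      rcases lt_or_eq_of_le (hfnn y) with h | h
      · exact h
      · exact absurd (hf0 y h.symm) hyX
    · -- critical points
      intro x hx
      rw [hfD x] at hx
      have happ0 : ∀ u, D x u = 0 := fun u => by rw [hx]; simp
      have hsing : ∀ k : Fin n, ℓ (Pi.single k 1) = c ^ (k:ℕ) := fun k => by
        rw [hℓ]; exact Lclm_single n c k
      have E0 : 2 * a x * (x i1 * P₁.derivative.eval (ℓ x) - P₂.derivative.eval (ℓ x))
          + 2 * q.eval (ℓ x) * q.derivative.eval (ℓ x)
          - ∑ j ∈ s2, (2 * (x j - (γ j).eval (ℓ x)) * (γ j).derivative.eval (ℓ x)) = 0 := by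
        have h := happ0 (Pi.single i0 1)
        rw [happly, hsing i0] at h
        have h1 : Pi.single (M := fun _ : Fin n => ℝ) i0 1 i1 = 0 :=
          Pi.single_eq_of_ne hi01.symm 1
        have h2 : ∑ j ∈ s2, (2 * (x j - (γ j).eval (ℓ x))) *
            Pi.single (M := fun _ : Fin n => ℝ) i0 1 j = 0 :=
          Finset.sum_eq_zero fun j hj => by
            have hji0 : j ≠ i0 := fun hh => hi0s2 (by rw [← hh]; exact hj)
            rw [Pi.single_eq_of_ne hji0, mul_zero]
        rw [h1, h2, mul_zero, add_zero, add_zero] at h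
        have hc0 : (i0 : ℕ) = 0 := rfl
        rw [hc0, pow_zero, mul_one] at h
        exact h
      have E1 : 2 * a x * P₁.eval (ℓ x) = 0 := by
        have h := happ0 (Pi.single i1 1)
        rw [happly, hsing i1, E0] at h
        have h2 : ∑ j ∈ s2, (2 * (x j - (γ j).eval (ℓ x))) *
            Pi.single (M := fun _ : Fin n => ℝ) i1 1 j = 0 :=
          Finset.sum_eq_zero fun j hj => by
            have hji1 : j ≠ i1 := fun hh => hi1s2 (by rw [← hh]; exact hj)
            rw [Pi.single_eq_of_ne hji1, mul_zero]
        rw [h2, Pi.single_eq_same, mul_one] at h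
        simp only [zero_mul, zero_add, add_zero] at h
        exact h
      have Es2 : ∀ k ∈ s2, x k = (γ k).eval (ℓ x) := by
        intro k hk
        have h := happ0 (Pi.single k 1)
        rw [happly, hsing k, E0] at h
        have h1 : Pi.single (M := fun _ : Fin n => ℝ) k 1 i1 = 0 :=
          Pi.single_eq_of_ne (fun hh => hi1s2 (by rw [hh]; exact hk)) 1
        have h2 : ∑ j ∈ s2, (2 * (x j - (γ j).eval (ℓ x))) *
            Pi.single (M := fun _ : Fin n => ℝ) k 1 j
            = 2 * (x k - (γ k).eval (ℓ x)) := by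
          rw [Finset.sum_eq_single k (fun j _ hj => by
            rw [Pi.single_eq_of_ne hj, mul_zero]) (fun hh => absurd hk hh)]
          rw [Pi.single_eq_same, mul_one]
        rw [h1, h2] at h
        simp only [mul_zero, zero_mul, zero_add, add_zero] at h
        have := mul_eq_zero.mp h
        rcases this with h' | h'
        · norm_num at h'
        · linarith [sub_eq_zero.mp h']
      have hsum0 : ∑ j ∈ s2, (2 * (x j - (γ j).eval (ℓ x)) * (γ j).derivative.eval (ℓ x)) = 0 :=
        Finset.sum_eq_zero fun j hj => by rw [Es2 j hj, sub_self, mul_zero, zero_mul]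
      by_cases hq' : q.derivative.eval (ℓ x) = 0
      · exfalso
        have hqt : q.eval (ℓ x) ≠ 0 := fun h0 => hqd_node (ℓ x) ((hqzero _).mp h0) hq'
        have hP₁0 : P₁.eval (ℓ x) = 0 := by
          rw [hP₁, Polynomial.eval_mul, hq', mul_zero]
        have hax : a x = -(q.eval (ℓ x) * m.eval (ℓ x)) := by
          have hrfl : a x = P₁.eval (ℓ x) * x i1 - P₂.eval (ℓ x) := rfl
          rw [hrfl, hP₂]
          simp only [Polynomial.eval_add, Polynomial.eval_mul, hP₁0]
          ring
        have hP₁d : P₁.derivative.eval (ℓ x) = 0 := by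
          rw [hP₁]
          simp only [Polynomial.derivative_mul, Polynomial.eval_add, Polynomial.eval_mul, hq']
          ring
        have hmd : m.derivative.eval (ℓ x) = 1 := by
          rw [hm]
          simp
        have hP₂d : P₂.derivative.eval (ℓ x) = q.eval (ℓ x) := by
          rw [hP₂]
          simp only [Polynomial.derivative_add, Polynomial.derivative_mul,
            Polynomial.eval_add, Polynomial.eval_mul, hP₁d, hP₁0, hq', hmd]
          ring
        have hm0 : m.eval (ℓ x) ≠ 0 := by
          rw [hm]
          simp only [Polynomial.eval_sub, Polynomial.eval_X, Polynomial.eval_C]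
          intro hh
          have : ℓ x = c₀ := by linarith [sub_eq_zero.mp hh]
          rw [this] at hq'
          exact hc₀ hq'
        rw [hax, hP₁d, hP₂d, hsum0, hq'] at E0
        have hgoal : 2 * q.eval (ℓ x) * q.eval (ℓ x) * m.eval (ℓ x) = 0 := by
          linear_combination E0
        exact (mul_ne_zero (mul_ne_zero (mul_ne_zero two_ne_zero hqt) hqt) hm0) hgoal
      · have hP₁ne : P₁.eval (ℓ x) ≠ 0 := by
          rw [hP₁, Polynomial.eval_mul]
          exact mul_ne_zero hq' hq'
        have hax : a x = 0 := by
          rcases mul_eq_zero.mp E1 with h' | h'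
          · rcases mul_eq_zero.mp h' with h'' | h''
            · norm_num at h''
            · exact h''
          · exact absurd h' hP₁ne
        have hq0 : q.eval (ℓ x) = 0 := by
          rw [hax, hsum0] at E0
          have h2 : q.eval (ℓ x) * q.derivative.eval (ℓ x) = 0 := by
            linear_combination E0 / 2
          rcases mul_eq_zero.mp h2 with h' | h'
          · exact h'
          · exact absurd h' hq'
        exact hxeq x hq0 hax Es2
end
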